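/- Let R be a Dedekind domain in which every ideal class contains a nonzero prime ideal. Then the class group of R has at most 2 elements if and only if for all irreducibles x, y of R, the set of lengths L(xy) equals {2}. -/

import Mathlib

/-!
An element `x` of a Dedekind domain is irreducible iff no nonempty proper subproduct of the prime
factorization of `(x)` is principal.

If the class group has at most two elements, any two non-principal primes have principal product,
so for an irreducible `π` the ideal `(π)` is either a principal prime or a product of two
non-principal primes. Weighting principal primes by `2` and the others by `1`, every irreducible
thus has weight `2`; weights add up, so every factorization of `x * y` has length `2`.

Conversely, take classes `g`, `h` with `g, h, g * h ≠ 1` and a prime `P c` in each class `c`.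
The ideals `P g P h P (gh)⁻¹`, `P g⁻¹ P h⁻¹ P (gh)` and `P c P c⁻¹` (for `c = g, h, gh`) are
generated by irreducibles, and the two resulting factorizations of one element have lengths
`2` and `3`.
-/

/-- The set of lengths of factorizations of `z` into irreducibles. -/
def lengthSet {R : Type*} [CommMonoidWithZero R] (z : R) : Set ℕ :=
  {k : ℕ | ∃ α : Fin k → R, (∀ i, Irreducible (α i)) ∧ z = ∏ i, α i}

open UniqueFactorizationMonoid Multiset
open scoped nonZeroDivisors

theorem exists_forall_eq_or_eq_iff_mul_eq_one {G : Type*} [Group G] :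
    (∃ a b : G, ∀ g, g = a ∨ g = b) ↔ ∀ c d : G, c ≠ 1 → d ≠ 1 → c * d = 1 := by
  constructor
  · rintro ⟨a, b, hab⟩ c d hc hd
    have hG : ∀ e : G, e = 1 ∨ e = c := by
      intro e
      rcases hab 1 with h1 | h1 <;> rcases hab c with h2 | h2 <;> rcases hab e with h3 | h3 <;>
        simp_all
    obtain rfl : d = c := (hG d).resolve_left hd
    exact (hG (d * d)).resolve_right fun h => hd (mul_eq_right.mp h)
  · intro h
    by_cases hG : ∃ g : G, g ≠ 1
    · obtain ⟨g, hg⟩ := hG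
      refine ⟨1, g, fun e => or_iff_not_imp_left.mpr fun he => ?_⟩
      rw [eq_inv_of_mul_eq_one_right (h g e hg he), ← eq_inv_of_mul_eq_one_right (h g g hg hg)]
    · push Not at hG
      exact ⟨1, 1, fun e => Or.inl (hG e)⟩

section lengthSet

variable {M : Type*} [CommMonoidWithZero M] {x y z : M}

theorem two_mem_lengthSet_mul (hx : Irreducible x) (hy : Irreducible y) :
    2 ∈ lengthSet (x * y) :=
  ⟨![x, y], by simp [Fin.forall_fin_two, hx, hy], by simp⟩

theorem three_mem_lengthSet_of_associated {a b c : M} (ha : Irreducible a) (hb : Irreducible b)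
    (hc : Irreducible c) (h : Associated (a * b * c) z) : 3 ∈ lengthSet z := by
  obtain ⟨u, rfl⟩ := h
  refine ⟨![a, b, c * u], ?_, by simp [Fin.prod_univ_three, mul_assoc]⟩
  simp [Fin.forall_fin_succ, ha, hb, (irreducible_mul_isUnit u.isUnit).mpr hc]

end lengthSet

section Dedekind

variable {R : Type*} [CommRing R] [IsDedekindDomain R]

theorem ClassGroup.mk0_mul_mk {I J : Ideal R} (hI : I ∈ (Ideal R)⁰) (hJ : J ∈ (Ideal R)⁰) :
    ClassGroup.mk0 ⟨I * J, mul_mem hI hJ⟩ = ClassGroup.mk0 ⟨I, hI⟩ * ClassGroup.mk0 ⟨J, hJ⟩ := by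
  rw [← map_mul]
  rfl

theorem Ideal.IsPrincipal.of_isPrincipal_mul {I J : Ideal R} (hI : I ≠ ⊥) (hJ : J ≠ ⊥)
    (hIJ : (I * J).IsPrincipal) (hIp : I.IsPrincipal) : J.IsPrincipal := by
  have hI0 := mem_nonZeroDivisors_of_ne_zero hI
  have hJ0 := mem_nonZeroDivisors_of_ne_zero hJ
  rw [← ClassGroup.mk0_eq_one_iff hI0] at hIp
  rw [← ClassGroup.mk0_eq_one_iff (mul_mem hI0 hJ0), ClassGroup.mk0_mul_mk hI0 hJ0, hIp,
    one_mul] at hIJ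
  exact (ClassGroup.mk0_eq_one_iff hJ0).mp hIJ

theorem Ideal.isPrincipal_mul_of_not_isPrincipal
    (hCl : ∀ c d : ClassGroup R, c ≠ 1 → d ≠ 1 → c * d = 1) {I J : Ideal R} (hI : I ≠ ⊥)
    (hJ : J ≠ ⊥) (hIp : ¬I.IsPrincipal) (hJp : ¬J.IsPrincipal) : (I * J).IsPrincipal := by
  have hI0 := mem_nonZeroDivisors_of_ne_zero hI
  have hJ0 := mem_nonZeroDivisors_of_ne_zero hJ
  rw [← ClassGroup.mk0_eq_one_iff hI0] at hIp
  rw [← ClassGroup.mk0_eq_one_iff hJ0] at hJp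
  rw [← ClassGroup.mk0_eq_one_iff (mul_mem hI0 hJ0), ClassGroup.mk0_mul_mk hI0 hJ0]
  exact hCl _ _ hIp hJp

theorem irreducible_iff_normalizedFactors_span {x : R} (hx : x ≠ 0) :
    Irreducible x ↔ normalizedFactors (Ideal.span {x}) ≠ 0 ∧
      ∀ T ≤ normalizedFactors (Ideal.span {x}), T.prod.IsPrincipal →
        T = 0 ∨ T = normalizedFactors (Ideal.span {x}) := by
  have hspan : ∀ {a : R}, a ≠ 0 → Ideal.span {a} ≠ ⊥ := fun ha => by
    rwa [Ne, Ideal.span_singleton_eq_bot]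
  have hunit : ∀ {a : R}, a ≠ 0 → (normalizedFactors (Ideal.span {a}) = 0 ↔ IsUnit a) :=
    fun ha => by
      rw [normalizedFactors_eq_zero_iff (hspan ha), Ideal.isUnit_iff, Ideal.span_singleton_eq_top]
  constructor
  · intro hirr
    refine ⟨(hunit hx).not.mpr hirr.not_isUnit, fun T hT ⟨⟨a, ha⟩⟩ => ?_⟩
    change T.prod = Ideal.span {a} at ha
    have hnf : normalizedFactors T.prod = T := normalizedFactors_prod_of_prime fun P hP =>
      prime_of_normalized_factor P (mem_of_le hT hP)
    have hax : a ∣ x := by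
      rw [← Ideal.span_singleton_le_span_singleton, ← ha,
        ← Ideal.prod_normalizedFactors_eq_self (hspan hx)]
      exact Ideal.le_of_dvd (prod_dvd_prod_of_le hT)
    rcases hirr.dvd_iff.mp hax with hu | hassoc
    · left
      rw [← hnf, ha, Ideal.span_singleton_eq_top.mpr hu, ← Ideal.one_eq_top, normalizedFactors_one]
    · right
      rw [← hnf, ha, Ideal.span_singleton_eq_span_singleton.mpr hassoc.symm]
  · rintro ⟨hx0, hsub⟩
    refine ⟨fun hu => hx0 ((hunit hx).mpr hu), fun a b hab => ?_⟩
    subst hab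
    have ha := left_ne_zero_of_mul hx
    have hb := right_ne_zero_of_mul hx
    have hsplit : normalizedFactors (Ideal.span {a * b}) =
        normalizedFactors (Ideal.span {a}) + normalizedFactors (Ideal.span {b}) := by
      rw [← Ideal.span_singleton_mul_span_singleton, normalizedFactors_mul (hspan ha) (hspan hb)]
    rcases hsub _ (hsplit ▸ le_add_right _ _)
        ⟨⟨a, Ideal.prod_normalizedFactors_eq_self (hspan ha)⟩⟩ with h | h
    · exact Or.inl ((hunit ha).mp h)
    · rw [hsplit, left_eq_add] at h
      exact Or.inr ((hunit hb).mp h)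

theorem irreducible_of_span_eq_prod {S : Multiset (Ideal R)} (hprime : ∀ P ∈ S, Prime P)
    (hnp : ∀ P ∈ S, ¬P.IsPrincipal) (hS : S ≠ 0) (hcard : card S ≤ 3) {x : R}
    (hx : Ideal.span {x} = S.prod) : Irreducible x := by
  have hprod : S.prod ≠ ⊥ := prod_ne_zero_of_prime S hprime
  have hx0 : x ≠ 0 := by
    rintro rfl
    exact hprod (by rw [← hx, Ideal.span_singleton_eq_bot])
  rw [irreducible_iff_normalizedFactors_span hx0, hx, normalizedFactors_prod_of_prime hprime]
  refine ⟨hS, fun T hT hTp => ?_⟩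
  obtain ⟨U, rfl⟩ := Multiset.le_iff_exists_add.mp hT
  rw [prod_add] at hprod
  have hUp : U.prod.IsPrincipal :=
    Ideal.IsPrincipal.of_isPrincipal_mul (left_ne_zero_of_mul hprod) (right_ne_zero_of_mul hprod)
      (by rw [← prod_add, ← hx]; exact ⟨⟨x, rfl⟩⟩) hTp
  have hcard_ne_one : ∀ V ≤ T + U, V.prod.IsPrincipal → card V ≠ 1 := by
    intro V hV hVp hV1
    obtain ⟨P, rfl⟩ := card_eq_one.mp hV1
    exact hnp P (mem_of_le hV (mem_singleton_self P)) (by simpa using hVp)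
  have hT1 := hcard_ne_one T (le_add_right _ _) hTp
  have hU1 := hcard_ne_one U (le_add_left _ _) hUp
  rw [card_add] at hcard
  rcases (by omega : card T = 0 ∨ card U = 0) with h | h
  · exact Or.inl (card_eq_zero.mp h)
  · exact Or.inr (by rw [card_eq_zero.mp h, add_zero])

open Classical in
noncomputable def factorWeight (I : Ideal R) : ℕ :=
  ((normalizedFactors I).map fun P => if P.IsPrincipal then 2 else 1).sum

theorem factorWeight_mul {I J : Ideal R} (hI : I ≠ ⊥) (hJ : J ≠ ⊥) :
    factorWeight (I * J) = factorWeight I + factorWeight J := by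
  simp only [factorWeight, normalizedFactors_mul hI hJ, map_add, sum_add]

theorem factorWeight_span_prod {ι : Type*} (s : Finset ι) {f : ι → R} (hf : ∀ i ∈ s, f i ≠ 0) :
    factorWeight (Ideal.span {∏ i ∈ s, f i}) = ∑ i ∈ s, factorWeight (Ideal.span {f i}) := by
  classical
  induction s using Finset.induction_on with
  | empty => simp [factorWeight, ← Ideal.one_eq_top]
  | insert a s ha ih =>
    have hs : ∀ i ∈ s, f i ≠ 0 := fun i hi => hf i (Finset.mem_insert_of_mem hi)
    rw [Finset.prod_insert ha, Finset.sum_insert ha, ← Ideal.span_singleton_mul_span_singleton,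
      factorWeight_mul, ih hs]
    · rw [Ne, Ideal.span_singleton_eq_bot]
      exact hf a (Finset.mem_insert_self a s)
    · rw [Ne, Ideal.span_singleton_eq_bot, Finset.prod_eq_zero_iff]
      exact fun ⟨i, hi, hfi⟩ => hs i hi hfi

theorem factorWeight_span_of_irreducible
    (hCl : ∀ c d : ClassGroup R, c ≠ 1 → d ≠ 1 → c * d = 1) {π : R} (hπ : Irreducible π) :
    factorWeight (Ideal.span {π}) = 2 := by
  classical
  obtain ⟨hM0, hsub⟩ := (irreducible_iff_normalizedFactors_span hπ.ne_zero).mp hπ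
  rw [factorWeight]
  set M := normalizedFactors (Ideal.span {π})
  by_cases hM : ∃ P ∈ M, P.IsPrincipal
  · obtain ⟨P, hP, hPp⟩ := hM
    have hMP : M = {P} := ((hsub {P} (singleton_le.mpr hP) (by simpa using hPp)).resolve_left
      (singleton_ne_zero P)).symm
    simp [hMP, hPp]
  push Not at hM
  obtain ⟨P, hP⟩ := exists_mem_of_ne_zero hM0
  rcases (M.erase P).empty_or_exists_mem with hMP | ⟨Q, hQ⟩
  · have hprod : M.prod = Ideal.span {π} :=
      Ideal.prod_normalizedFactors_eq_self (by simpa using hπ.ne_zero)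
    rw [← cons_erase hP, hMP] at hprod
    exact absurd ⟨⟨π, by simpa using hprod⟩⟩ (hM P hP)
  · have hle : {P, Q} ≤ M := by
      rw [← cons_erase hP, insert_eq_cons]
      exact cons_le_cons P (singleton_le.mpr hQ)
    have hQM : Q ∈ M := mem_of_mem_erase hQ
    have hPQ : ({P, Q} : Multiset (Ideal R)).prod.IsPrincipal := by
      simpa using Ideal.isPrincipal_mul_of_not_isPrincipal hCl
        (prime_of_normalized_factor P hP).ne_zero (prime_of_normalized_factor Q hQM).ne_zero
        (hM P hP) (hM Q hQM)
    have hMPQ : M = {P, Q} := ((hsub _ hle hPQ).resolve_left (by simp)).symm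
    simp [hMPQ, hM P hP, hM Q hQM]

theorem lengthSet_mul_eq_two (hCl : ∀ c d : ClassGroup R, c ≠ 1 → d ≠ 1 → c * d = 1) {x y : R}
    (hx : Irreducible x) (hy : Irreducible y) : lengthSet (x * y) = {2} := by
  ext k
  refine ⟨fun ⟨α, hα, hxy⟩ => ?_,
    fun hk => (Set.mem_singleton_iff.mp hk) ▸ two_mem_lengthSet_mul hx hy⟩
  have hweight := factorWeight_span_prod Finset.univ fun i _ => (hα i).ne_zero
  rw [← hxy, ← Ideal.span_singleton_mul_span_singleton,
    factorWeight_mul (by simpa using hx.ne_zero) (by simpa using hy.ne_zero),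
    factorWeight_span_of_irreducible hCl hx, factorWeight_span_of_irreducible hCl hy] at hweight
  simp only [factorWeight_span_of_irreducible hCl (hα _), Finset.sum_const, Finset.card_univ,
    Fintype.card_fin, smul_eq_mul] at hweight
  simp only [Set.mem_singleton_iff]
  omega

theorem exists_irreducible_span_eq_prod_of_classes {p : ClassGroup R → (Ideal R)⁰}
    (hp : ∀ c, (p c : Ideal R).IsPrime) (hpc : ∀ c, ClassGroup.mk0 (p c) = c)
    (l : Multiset (ClassGroup R)) (hl1 : ∀ c ∈ l, c ≠ 1) (hl0 : l ≠ 0) (hcard : card l ≤ 3)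
    (hprod : l.prod = 1) :
    ∃ x : R, Irreducible x ∧ Ideal.span {x} = (l.map fun c => (p c : Ideal R)).prod := by
  have hclass : ClassGroup.mk0 (l.map p).prod = 1 := by
    rw [map_multiset_prod, map_map, Function.comp_def]
    simpa only [hpc, map_id'] using hprod
  obtain ⟨x, hx⟩ := ((ClassGroup.mk0_eq_one_iff (l.map p).prod.2).mp hclass).principal
  rw [Submonoid.coe_multiset_prod, map_map] at hx
  refine ⟨x, irreducible_of_span_eq_prod ?_ ?_ (by simpa using hl0) (by simpa using hcard) hx.symm,
    hx.symm⟩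
  · simp only [mem_map, forall_exists_index, and_imp, forall_apply_eq_imp_iff₂]
    exact fun c _ => Ideal.prime_of_isPrime (nonZeroDivisors.coe_ne_zero (p c)) (hp c)
  · simp only [mem_map, forall_exists_index, and_imp, forall_apply_eq_imp_iff₂]
    intro c hc hcp
    exact hl1 c hc (by rw [← hpc c, ClassGroup.mk0_eq_one_iff]; exact hcp)

theorem exists_irreducible_three_mem_lengthSet_mul
    (hprimes : ∀ c : ClassGroup R, ∃ (𝔭 : Ideal R) (h𝔭 : 𝔭 ∈ (Ideal R)⁰),
      𝔭.IsPrime ∧ ClassGroup.mk0 ⟨𝔭, h𝔭⟩ = c)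
    {g h : ClassGroup R} (hg : g ≠ 1) (hh : h ≠ 1) (hgh : g * h ≠ 1) :
    ∃ x y : R, Irreducible x ∧ Irreducible y ∧ 3 ∈ lengthSet (x * y) := by
  choose P hP hprime hclass using hprimes
  let p c : (Ideal R)⁰ := ⟨P c, hP c⟩
  have key := exists_irreducible_span_eq_prod_of_classes (p := p) hprime hclass
  obtain ⟨x, hx, hxs⟩ := key {g, h, (g * h)⁻¹} (by simp [hg, hh, hgh, -mul_inv_rev])
    (by simp) (by simp) (by simp)
  obtain ⟨y, hy, hys⟩ := key {g⁻¹, h⁻¹, g * h} (by simp [hg, hh, hgh]) (by simp) (by simp)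
    (by simp [mul_comm g h])
  obtain ⟨a, ha, has⟩ := key {g, g⁻¹} (by simp [hg]) (by simp) (by simp) (by simp)
  obtain ⟨b, hb, hbs⟩ := key {h, h⁻¹} (by simp [hh]) (by simp) (by simp) (by simp)
  obtain ⟨c, hc, hcs⟩ := key {g * h, (g * h)⁻¹} (by simp [hgh, -mul_inv_rev]) (by simp)
    (by simp) (by simp)
  refine ⟨x, y, hx, hy, three_mem_lengthSet_of_associated ha hb hc ?_⟩
  rw [← Ideal.span_singleton_eq_span_singleton, ← Ideal.span_singleton_mul_span_singleton,
    ← Ideal.span_singleton_mul_span_singleton, ← Ideal.span_singleton_mul_span_singleton,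
    has, hbs, hcs, hxs, hys]
  simp only [insert_eq_cons, map_cons, map_singleton, prod_cons, prod_singleton]
  ring

end Dedekind

theorem class_number_le_two_iff_length_of_products_of_two_general
    {R : Type*} [CommRing R] [IsDedekindDomain R]
    (hprimes : ∀ c : ClassGroup R, ∃ (𝔭 : Ideal R) (h𝔭 : 𝔭 ∈ nonZeroDivisors (Ideal R)),
      𝔭.IsPrime ∧ 𝔭 ≠ ⊥ ∧ ClassGroup.mk0 ⟨𝔭, h𝔭⟩ = c) :
    (∃ a b : ClassGroup R, ∀ g : ClassGroup R, g = a ∨ g = b) ↔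
      ∀ x y : R, Irreducible x → Irreducible y → lengthSet (x * y) = {2} := by
  rw [exists_forall_eq_or_eq_iff_mul_eq_one]
  refine ⟨fun hCl x y hx hy => lengthSet_mul_eq_two hCl hx hy, fun hL => ?_⟩
  by_contra! ⟨g, h, hg, hh, hgh⟩
  obtain ⟨x, y, hx, hy, h3⟩ := exists_irreducible_three_mem_lengthSet_mul
    (fun c => (hprimes c).imp fun 𝔭 ⟨h𝔭, hprime, _, hc⟩ => ⟨h𝔭, hprime, hc⟩) hg hh hgh
  simp [hL x y hx hy] at h3

theorem class_number_le_two_iff_length_of_products_of_two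
    {R : Type*} [CommRing R] [IsDomain R] [IsDedekindDomain R]
    (hprimes : ∀ c : ClassGroup R, ∃ (𝔭 : Ideal R) (h𝔭 : 𝔭 ∈ nonZeroDivisors (Ideal R)),
      𝔭.IsPrime ∧ 𝔭 ≠ ⊥ ∧ ClassGroup.mk0 ⟨𝔭, h𝔭⟩ = c) :
    (∃ a b : ClassGroup R, ∀ g : ClassGroup R, g = a ∨ g = b) ↔
      ∀ x y : R, Irreducible x → Irreducible y → lengthSet (x * y) = {2} :=
  class_number_le_two_iff_length_of_products_of_two_general hprimes
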